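/- For any constant c₀ with 0 < c₀ < 1/λ₊ + 1/λ₋ there exists c₁ > 0 such that for all sufficiently small λ > 0, E[exp(λ(c₀·n − T_{2n}))] ≤ (1 − c₁λ)^n < 1 for all n ≥ 1. -/

import Mathlib

/-!
By independence, `E[exp(λ(c₀ n - T_{2n}))] = e^{λ c₀ n} (λ₋/(λ₋+λ))^{n+1} (λ₊/(λ₊+λ))^n`, which is at
most the `n`-th power of `e^{λ c₀} · λ₊/(λ₊+λ) · λ₋/(λ₋+λ)`. This factor equals `1` at `λ = 0` and has
derivative `c₀ - 1/λ₊ - 1/λ₋ < 0` there, so it is at most `1 - c₁ λ` for small `λ`; quantitatively,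
`e^{c₀ λ} ≤ 1/(1 - c₀ λ)` reduces this to a polynomial inequality.
-/

open MeasureTheory ProbabilityTheory Real Filter

lemma Finset.prod_range_two_mul_add_one_ite_even {M : Type*} [CommMonoid M] (a b : M) (n : ℕ) :
    ∏ j ∈ Finset.range (2 * n + 1), (if Even j then a else b) = a ^ (n + 1) * b ^ n := by
  induction n with
  | zero => simp
  | succ n ih =>
    rw [show 2 * (n + 1) + 1 = 2 * n + 1 + 1 + 1 by ring, Finset.prod_range_succ,
      Finset.prod_range_succ, ih, if_neg (by simp [parity_simps]), if_pos (by simp [parity_simps]),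
      pow_succ a (n + 1), pow_succ b n]
    ac_rfl

lemma one_le_mul_one_sub_mul_one_add {A B c₀ c₁ x : ℝ} (hA : 0 ≤ A) (hB : 0 ≤ B)
    (hc₀ : 0 ≤ c₀) (hc₁ : 0 < c₁) (hsum : c₀ + 2 * c₁ ≤ A + B) (hx : 0 ≤ x)
    (hsmall : (c₀ + c₁) * (A + B) * x ≤ c₁) :
    1 ≤ (1 - c₀ * x) * (1 - c₁ * x) * ((1 + A * x) * (1 + B * x)) := by
  have hAB : 0 < A + B := by linarith
  have hlin : (c₀ + c₁) * x ≤ 1 := by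
    by_contra! h
    nlinarith
  have hneg : 1 - (c₀ + c₁) * x ≤ (1 - c₀ * x) * (1 - c₁ * x) := by
    nlinarith [mul_nonneg (mul_nonneg hc₀ hc₁.le) (mul_nonneg hx hx)]
  have hpos : 1 + (A + B) * x ≤ (1 + A * x) * (1 + B * x) := by
    nlinarith [mul_nonneg (mul_nonneg hA hB) (mul_nonneg hx hx)]
  calc (1 : ℝ) ≤ (1 - (c₀ + c₁) * x) * (1 + (A + B) * x) := by nlinarith
    _ ≤ _ := mul_le_mul hneg hpos (by positivity) (by linarith)

lemma exp_mul_mul_div_add_mul_div_add_le {p m c₀ c₁ x : ℝ} (hp : 0 < p) (hm : 0 < m)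
    (hc₀ : 0 ≤ c₀) (hc₁ : 0 < c₁) (hsum : c₀ + 2 * c₁ ≤ 1 / p + 1 / m) (hx : 0 ≤ x)
    (hsmall : (c₀ + c₁) * (1 / p + 1 / m) * x ≤ c₁) :
    exp (c₀ * x) * (p / (p + x)) * (m / (m + x)) ≤ 1 - c₁ * x := by
  have hkey := one_le_mul_one_sub_mul_one_add (by positivity) (by positivity) hc₀ hc₁ hsum hx
    hsmall
  have hS : 0 < 1 / p + 1 / m := by positivity
  have hc₀x : c₀ * x < 1 := by
    by_contra! h
    nlinarith [mul_nonneg (sub_nonneg.2 h) hS.le, mul_nonneg (mul_nonneg hc₁.le hx) hS.le]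
  have hp' : p / (p + x) = 1 / (1 + 1 / p * x) := by field_simp
  have hm' : m / (m + x) = 1 / (1 + 1 / m * x) := by field_simp
  calc exp (c₀ * x) * (p / (p + x)) * (m / (m + x))
      ≤ 1 / (1 - c₀ * x) * (p / (p + x)) * (m / (m + x)) := by
        gcongr
        exact exp_bound_div_one_sub_of_interval (by positivity) hc₀x
    _ = 1 / ((1 - c₀ * x) * ((1 + 1 / p * x) * (1 + 1 / m * x))) := by
        rw [hp', hm']; field_simp
    _ ≤ 1 - c₁ * x := by
        rw [div_le_iff₀ (mul_pos (by linarith) (by positivity))]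
        linarith

namespace ProbabilityTheory

lemma mgf_id_expMeasure {r t : ℝ} (hr : 0 < r) (ht : t < r) :
    mgf id (expMeasure r) t = r / (r - t) := by
  have hdens : (fun x => (exponentialPDF r x).toReal • exp (t * x))
      = Set.indicator (Set.Ici 0) (fun x => r * exp ((t - r) * x)) := by
    ext x
    by_cases hx : 0 ≤ x
    · rw [exponentialPDF_of_nonneg hx, ENNReal.toReal_ofReal (by positivity),
        Set.indicator_of_mem (Set.mem_Ici.2 hx), smul_eq_mul, mul_assoc, ← exp_add]
      ring_nf
    · rw [exponentialPDF_of_neg (not_le.1 hx), Set.indicator_of_notMem (mt Set.mem_Ici.1 hx)]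
      simp
  have hpdf : gammaPDF 1 r = exponentialPDF r := rfl
  rw [mgf, expMeasure, gammaMeasure, hpdf,
    integral_withDensity_eq_integral_toReal_smul (f := exponentialPDF r)
      (measurable_exponentialPDFReal r).ennreal_ofReal
      (ae_of_all _ fun _ => ENNReal.ofReal_lt_top)]
  simp only [id, hdens, integral_indicator measurableSet_Ici, integral_Ici_eq_integral_Ioi,
    integral_const_mul, integral_exp_mul_Ioi (sub_neg.2 ht), mul_zero, exp_zero]
  rw [neg_div, ← div_neg, neg_sub, mul_one_div]

lemma iIndepFun.mgf_sum_of_map_eq_expMeasure {Ω ι : Type*} [MeasurableSpace Ω] {μ : Measure Ω}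
    {X : ι → Ω → ℝ} {r : ι → ℝ} (h_indep : iIndepFun X μ)
    (hX : ∀ i, μ.map (X i) = expMeasure (r i)) (hr : ∀ i, 0 < r i) (s : Finset ι) {t : ℝ}
    (ht : ∀ i ∈ s, t < r i) :
    mgf (∑ i ∈ s, X i) μ t = ∏ i ∈ s, r i / (r i - t) := by
  have hmeas : ∀ i, AEMeasurable (X i) μ := fun i =>
    .of_map_ne_zero <| by
      have := isProbabilityMeasure_expMeasure (hr i)
      rw [hX i]; exact IsProbabilityMeasure.ne_zero _
  rw [h_indep.mgf_sum₀ hmeas]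
  refine Finset.prod_congr rfl fun i hi => ?_
  rw [← mgf_id_map (hmeas i), hX i, mgf_id_expMeasure (hr i) (ht i hi)]

lemma map_eq_expMeasure_ite_even {Ω : Type*} [MeasurableSpace Ω] {μ : Measure Ω}
    {X : ℕ → Ω → ℝ} {a b : ℝ} (h0 : μ.map (X 0) = expMeasure a)
    (hodd : ∀ i, μ.map (X (2 * i + 1)) = expMeasure b)
    (heven : ∀ i, μ.map (X (2 * i + 2)) = expMeasure a) (j : ℕ) :
    μ.map (X j) = expMeasure (if Even j then a else b) := by
  obtain ⟨k, rfl | rfl⟩ := Nat.even_or_odd' j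
  · rw [if_pos (even_two_mul k)]
    cases k with
    | zero => exact h0
    | succ i => exact heven i
  · rw [if_neg (Nat.not_even_two_mul_add_one k)]
    exact hodd k

end ProbabilityTheory

theorem stmt_5_general
    {Ω : Type*} [MeasurableSpace Ω] (P : Measure Ω)
    (lamp lamm : ℝ) (hlamp : 0 < lamp) (hlamm : 0 < lamm)
    (ξ : ℕ → Ω → ℝ)
    (hindep : iIndepFun ξ P)
    (h0 : Measure.map (ξ 0) P = expMeasure lamm)
    (hS : ∀ i : ℕ, Measure.map (ξ (2 * i + 1)) P = expMeasure lamp)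
    (hU : ∀ i : ℕ, Measure.map (ξ (2 * i + 2)) P = expMeasure lamm)
    (T : ℕ → Ω → ℝ)
    (hT : ∀ n ω, T n ω = ∑ j ∈ Finset.range (2 * n + 1), ξ j ω)
    (c₀ : ℝ) (hc₀ : 0 < c₀) (hc₀' : c₀ < 1 / lamp + 1 / lamm) :
    ∃ c₁ > 0, ∃ lam₀ > 0, ∀ lam : ℝ, 0 < lam → lam < lam₀ → ∀ n : ℕ, 1 ≤ n →
      (∫ ω, Real.exp (lam * (c₀ * n - T n ω)) ∂P) ≤ (1 - c₁ * lam) ^ n ∧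
        (1 - c₁ * lam) ^ n < 1 := by
  set c₁ := (1 / lamp + 1 / lamm - c₀) / 2 with hc₁_def
  have hc₁ : 0 < c₁ := by linarith
  refine ⟨c₁, hc₁, c₁ / ((c₀ + c₁) * (1 / lamp + 1 / lamm)), by positivity, ?_⟩
  intro lam hlam hlam₀ n hn
  have hsmall : (c₀ + c₁) * (1 / lamp + 1 / lamm) * lam ≤ c₁ := by
    rw [lt_div_iff₀ (by positivity), mul_comm] at hlam₀
    exact hlam₀.le
  have hpair := exp_mul_mul_div_add_mul_div_add_le hlamp hlamm hc₀.le hc₁ (by linarith) hlam.le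
    hsmall
  have hmgf : mgf (T n) P (-lam) = (lamm / (lamm + lam)) ^ (n + 1) * (lamp / (lamp + lam)) ^ n := by
    rw [show T n = ∑ j ∈ Finset.range (2 * n + 1), ξ j from funext fun ω => by simp [hT],
      hindep.mgf_sum_of_map_eq_expMeasure (map_eq_expMeasure_ite_even h0 hS hU)
        (fun j => by split_ifs <;> assumption) _ (fun j _ => by split_ifs <;> linarith)]
    simp_rw [apply_ite (fun r => r / (r - -lam)), sub_neg_eq_add]
    exact Finset.prod_range_two_mul_add_one_ite_even _ _ n
  have hint : ∫ ω, exp (lam * (c₀ * n - T n ω)) ∂P = exp (c₀ * lam) ^ n * mgf (T n) P (-lam) := by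
    rw [mgf, ← integral_const_mul, ← exp_nat_mul]
    congr with ω
    rw [← exp_add]
    ring_nf
  have hm : lamm / (lamm + lam) ≤ 1 := div_le_one_of_le₀ (by linarith) (by positivity)
  have hpos : 0 < exp (c₀ * lam) * (lamp / (lamp + lam)) * (lamm / (lamm + lam)) := by positivity
  refine ⟨?_, pow_lt_one₀ (hpos.le.trans hpair) (by linarith [mul_pos hc₁ hlam]) (by omega)⟩
  calc ∫ ω, exp (lam * (c₀ * n - T n ω)) ∂P
      = exp (c₀ * lam) ^ n * ((lamm / (lamm + lam)) ^ (n + 1) * (lamp / (lamp + lam)) ^ n) := by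
        rw [hint, hmgf]
    _ ≤ exp (c₀ * lam) ^ n * ((lamm / (lamm + lam)) ^ n * (lamp / (lamp + lam)) ^ n) := by
        gcongr _ * (?_ * _)
        exact pow_le_pow_of_le_one (by positivity) hm n.le_succ
    _ = (exp (c₀ * lam) * (lamp / (lamp + lam)) * (lamm / (lamm + lam))) ^ n := by ring
    _ ≤ (1 - c₁ * lam) ^ n := by gcongr

theorem stmt_5
    {Ω : Type*} [MeasurableSpace Ω] (P : Measure Ω) [IsProbabilityMeasure P]
    (lamp lamm : ℝ) (hlamp : 0 < lamp) (hlamm : 0 < lamm)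
    (ξ : ℕ → Ω → ℝ)
    (hindep : iIndepFun ξ P)
    (h0 : Measure.map (ξ 0) P = expMeasure lamm)
    (hS : ∀ i : ℕ, Measure.map (ξ (2 * i + 1)) P = expMeasure lamp)
    (hU : ∀ i : ℕ, Measure.map (ξ (2 * i + 2)) P = expMeasure lamm)
    (T : ℕ → Ω → ℝ)
    (hT : ∀ n ω, T n ω = ∑ j ∈ Finset.range (2 * n + 1), ξ j ω)
    (c₀ : ℝ) (hc₀ : 0 < c₀) (hc₀' : c₀ < 1 / lamp + 1 / lamm) :
    ∃ c₁ > 0, ∃ lam₀ > 0, ∀ lam : ℝ, 0 < lam → lam < lam₀ → ∀ n : ℕ, 1 ≤ n →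
      (∫ ω, Real.exp (lam * (c₀ * n - T n ω)) ∂P) ≤ (1 - c₁ * lam) ^ n ∧
        (1 - c₁ * lam) ^ n < 1 :=
  stmt_5_general P lamp lamm hlamp hlamm ξ hindep h0 hS hU T hT c₀ hc₀ hc₀'
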